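/- Let (A, m, v) be a C*-Frobenius algebra in Hilb_f, equipped with the unique involution x ↦ x* satisfying ⟨x, y⟩ = v*(y* x), and let (X, m_X) be a left A-module in Hilb_f. Then the unitarity condition (m ⊗ id_X)(id_A ⊗ m_X*) = m_X* m_X holds if and only if the representation of A on X is *-preserving, i.e. ⟨a x, y⟩ = ⟨x, a* y⟩ for all a ∈ A and x, y ∈ X. -/

import Mathlib

/-!
Frobenius reciprocity `(m ⊗ id) ∘ (id ⊗ m*) = m* ∘ m` says that the adjoint of left multiplication
`L_a` is right `A`-linear, hence `L_a† = L_{a†}` with `a† = L_a†(1)`; the defining property of the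
involution forces `a† = a*`. Pairing the unitarity condition with pure tensors `b ⊗ z` turns it into
`⟪(a* b) z, x⟫ = ⟪b z, a x⟫`, which for `b = 1` is the *-property and conversely follows from it
applied to `y = b z`.
-/

open scoped TensorProduct InnerProductSpace

open LinearMap (adjoint)

/-- The functional `⟪a ⊗ b, ·⟫`; the adjoints `m*` and `m_X*` enter the statement only through
these. -/
noncomputable def tensPair {E F : Type*} [NormedAddCommGroup E] [InnerProductSpace ℂ E]
    [NormedAddCommGroup F] [InnerProductSpace ℂ F] (a : E) (b : F) :
    TensorProduct ℂ E F →ₗ[ℂ] ℂ :=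
  TensorProduct.lift ((LinearMap.mul ℂ ℂ).compl₁₂ (innerₛₗ ℂ a) (innerₛₗ ℂ b))

section TensorPairing

variable {E F G : Type*} [NormedAddCommGroup E] [InnerProductSpace ℂ E]
  [NormedAddCommGroup F] [InnerProductSpace ℂ F] [NormedAddCommGroup G] [InnerProductSpace ℂ G]

theorem tensPair_apply (a : E) (b : F) (t : E ⊗[ℂ] F) : tensPair a b t = ⟪a ⊗ₜ b, t⟫_ℂ :=
  LinearMap.congr_fun (TensorProduct.ext' fun _ _ => rfl : tensPair a b = innerₛₗ ℂ (a ⊗ₜ b)) t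

theorem tensPair_map_id [FiniteDimensional ℂ E] [FiniteDimensional ℂ F] [FiniteDimensional ℂ G]
    (f : G →ₗ[ℂ] E) (a : E) (b : F) (t : G ⊗[ℂ] F) :
    tensPair a b (TensorProduct.map f LinearMap.id t) = tensPair (adjoint f a) b t := by
  rw [tensPair_apply, tensPair_apply, ← LinearMap.adjoint_inner_left, TensorProduct.adjoint_map,
    TensorProduct.map_tmul, LinearMap.adjoint_id, LinearMap.id_apply]

theorem ext_tensPair {t t' : E ⊗[ℂ] F} (h : ∀ a b, tensPair a b t = tensPair a b t') : t = t' :=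
  TensorProduct.ext_iff_inner_left.mpr fun a b => by simpa only [tensPair_apply] using h a b

end TensorPairing

section Frobenius

variable {A : Type*} [NormedAddCommGroup A] [InnerProductSpace ℂ A] [FiniteDimensional ℂ A]
  {m : A →ₗ[ℂ] A →ₗ[ℂ] A} {mstar : A → A ⊗[ℂ] A} {e : A}

theorem mul_adjoint_mulLeft (hadj : ∀ a b y : A, tensPair a b (mstar y) = ⟪m a b, y⟫_ℂ)
    (hfrob : ∀ a b : A, TensorProduct.map (m a) LinearMap.id (mstar b) = mstar (m a b))
    (a x y : A) : m (adjoint (m a) x) y = adjoint (m a) (m x y) :=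
  ext_inner_right ℂ fun b => by
    rw [← hadj, ← tensPair_map_id, hfrob, hadj, LinearMap.adjoint_inner_left]

theorem adjoint_mulLeft_eq_mulLeft (hadj : ∀ a b y : A, tensPair a b (mstar y) = ⟪m a b, y⟫_ℂ)
    (hfrob : ∀ a b : A, TensorProduct.map (m a) LinearMap.id (mstar b) = mstar (m a b))
    (hul : ∀ a : A, m e a = a) (a : A) : adjoint (m a) = m (adjoint (m a) e) :=
  LinearMap.ext fun y => by rw [mul_adjoint_mulLeft hadj hfrob, hul]

theorem adjoint_mulLeft_eq_mulLeft_star (hadj : ∀ a b y : A, tensPair a b (mstar y) = ⟪m a b, y⟫_ℂ)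
    (hfrob : ∀ a b : A, TensorProduct.map (m a) LinearMap.id (mstar b) = mstar (m a b))
    (hul : ∀ a : A, m e a = a) (hur : ∀ a : A, m a e = a) {s : A → A}
    (hs : ∀ x y : A, ⟪x, y⟫_ℂ = ⟪e, m (s x) y⟫_ℂ) (a : A) : adjoint (m a) = m (s a) := by
  have hunit : ∀ d : A, adjoint (m d) e = 0 → d = 0 := fun d hd => by
    have hmd : m d = 0 := by
      rw [← LinearMap.adjoint_adjoint (m d), adjoint_mulLeft_eq_mulLeft hadj hfrob hul, hd,
        map_zero, map_zero]
    rw [← hur d, hmd, LinearMap.zero_apply]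
  suffices adjoint (m a) e = s a by rw [adjoint_mulLeft_eq_mulLeft hadj hfrob hul, this]
  refine sub_eq_zero.mp (hunit _ (ext_inner_right ℂ fun y => ?_))
  rw [LinearMap.adjoint_inner_left, inner_zero_left, map_sub, LinearMap.sub_apply, inner_sub_right,
    ← hs, ← adjoint_mulLeft_eq_mulLeft hadj hfrob hul,
    LinearMap.adjoint_inner_right, hur, sub_self]

end Frobenius

theorem map_id_adjointAct_eq_iff {A X : Type*} [NormedAddCommGroup A]
    [InnerProductSpace ℂ A] [FiniteDimensional ℂ A] [NormedAddCommGroup X] [InnerProductSpace ℂ X]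
    [FiniteDimensional ℂ X] {mX : A →ₗ[ℂ] X →ₗ[ℂ] X} {mXstar : X → A ⊗[ℂ] X}
    (hadjX : ∀ (a : A) (x y : X), tensPair a x (mXstar y) = ⟪mX a x, y⟫_ℂ)
    (f : A →ₗ[ℂ] A) (x x' : X) :
    TensorProduct.map f LinearMap.id (mXstar x) = mXstar x' ↔
      ∀ (b : A) (z : X), ⟪mX (adjoint f b) z, x⟫_ℂ = ⟪mX b z, x'⟫_ℂ := by
  refine ⟨fun h b z => ?_, fun h => ext_tensPair fun b z => ?_⟩
  · rw [← hadjX, ← tensPair_map_id, h, hadjX]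
  · rw [tensPair_map_id, hadjX, hadjX, h]

theorem statement2_general {A X : Type*} [NormedAddCommGroup A] [InnerProductSpace ℂ A]
    [FiniteDimensional ℂ A] [NormedAddCommGroup X] [InnerProductSpace ℂ X]
    [FiniteDimensional ℂ X]
    -- the C*-Frobenius algebra (A, m, v) with e = v(1):
    (m : A →ₗ[ℂ] A →ₗ[ℂ] A) (e : A)
    (hul : ∀ a : A, m e a = a) (hur : ∀ a : A, m a e = a)
    (mstar : A → TensorProduct ℂ A A)
    (hadj : ∀ a b y : A, tensPair a b (mstar y) = (inner ℂ (m a b) y : ℂ))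
    (hfrob₁ : ∀ a b : A,
      TensorProduct.map (m a) LinearMap.id (mstar b) = mstar (m a b))
    -- the involution determined by ⟪x, y⟫ = φ(x* y), φ = v* = ⟪e, ·⟫:
    (s : A → A)
    (hs : ∀ x y : A, (inner ℂ x y : ℂ) = (inner ℂ e (m (s x) y) : ℂ))
    -- the left A-module (X, m_X) in Hilb_f and the adjoint m_X*:
    (mX : A →ₗ[ℂ] X →ₗ[ℂ] X)
    (hmod : ∀ (a b : A) (x : X), mX (m a b) x = mX a (mX b x))
    (hmodu : ∀ x : X, mX e x = x)
    (mXstar : X → TensorProduct ℂ A X)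
    (hadjX : ∀ (a : A) (x y : X), tensPair a x (mXstar y) = (inner ℂ (mX a x) y : ℂ)) :
    -- unitarity ⇔ the representation is *-preserving:
    (∀ (a : A) (x : X),
        TensorProduct.map (m a) LinearMap.id (mXstar x) = mXstar (mX a x)) ↔
      (∀ (a : A) (x y : X), (inner ℂ (mX a x) y : ℂ) = (inner ℂ x (mX (s a) y) : ℂ)) := by
  have hstar := adjoint_mulLeft_eq_mulLeft_star hadj hfrob₁ hul hur hs
  simp only [map_id_adjointAct_eq_iff hadjX, hstar, hmod]
  refine ⟨fun h a x y => ?_, fun h a x b z => ?_⟩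
  · rw [← inner_conj_symm, ← hmodu y, ← h a x e y, hmodu, inner_conj_symm]
  · rw [← inner_conj_symm, ← h, inner_conj_symm]

theorem statement2 {A X : Type*} [NormedAddCommGroup A] [InnerProductSpace ℂ A]
    [FiniteDimensional ℂ A] [NormedAddCommGroup X] [InnerProductSpace ℂ X]
    [FiniteDimensional ℂ X]
    -- the C*-Frobenius algebra (A, m, v) with e = v(1):
    (m : A →ₗ[ℂ] A →ₗ[ℂ] A) (e : A)
    (hassoc : ∀ a b c : A, m (m a b) c = m a (m b c))
    (hul : ∀ a : A, m e a = a) (hur : ∀ a : A, m a e = a)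
    (mstar : A → TensorProduct ℂ A A)
    (hadj : ∀ a b y : A, tensPair a b (mstar y) = (inner ℂ (m a b) y : ℂ))
    (hfrob₁ : ∀ a b : A,
      TensorProduct.map (m a) LinearMap.id (mstar b) = mstar (m a b))
    (hfrob₂ : ∀ a b : A,
      TensorProduct.map LinearMap.id (m.flip b) (mstar a) = mstar (m a b))
    -- the involution determined by ⟪x, y⟫ = φ(x* y), φ = v* = ⟪e, ·⟫:
    (s : A → A)
    (hs_add : ∀ x y : A, s (x + y) = s x + s y)
    (hs_smul : ∀ (c : ℂ) (x : A), s (c • x) = starRingEnd ℂ c • s x)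
    (hs : ∀ x y : A, (inner ℂ x y : ℂ) = (inner ℂ e (m (s x) y) : ℂ))
    -- the left A-module (X, m_X) in Hilb_f and the adjoint m_X*:
    (mX : A →ₗ[ℂ] X →ₗ[ℂ] X)
    (hmod : ∀ (a b : A) (x : X), mX (m a b) x = mX a (mX b x))
    (hmodu : ∀ x : X, mX e x = x)
    (mXstar : X → TensorProduct ℂ A X)
    (hadjX : ∀ (a : A) (x y : X), tensPair a x (mXstar y) = (inner ℂ (mX a x) y : ℂ)) :
    -- unitarity ⇔ the representation is *-preserving:
    (∀ (a : A) (x : X),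
        TensorProduct.map (m a) LinearMap.id (mXstar x) = mXstar (mX a x)) ↔
      (∀ (a : A) (x y : X), (inner ℂ (mX a x) y : ℂ) = (inner ℂ x (mX (s a) y) : ℂ)) :=
  statement2_general m e hul hur mstar hadj hfrob₁ s hs mX hmod hmodu mXstar hadjX
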